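/- arXiv:1906.05089 — 2 statements merged into one kernel-verified Lean document; each statement's English description precedes it below -/
import Mathlib

section
/- For every integer n ≥ 3, the broadcast packing number of the cycle C_n equals its diameter, i.e. P_b(C_n) = ⌊n/2⌋. -/
open SimpleGraph

namespace Broadcast

variable {V : Type*} [Fintype V]

/-- The eccentricity of a vertex: the maximum distance from `v` to any vertex. -/
noncomputable def ecc (G : SimpleGraph V) (v : V) : ℕ :=
  Finset.univ.sup fun u => G.dist v u

/-- A broadcast on `G`: `f v ≤ e_G(v)` for every vertex `v`. -/
def IsBroadcast (G : SimpleGraph V) (f : V → ℕ) : Prop :=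
  ∀ v, f v ≤ ecc G v

/-- The cost of a broadcast. -/
def cost (f : V → ℕ) : ℕ := ∑ v, f v

/-- `hears G f u` is H_f(u): the set of f-broadcast vertices `v` with `d(u,v) ≤ f v`. -/
def hears (G : SimpleGraph V) (f : V → ℕ) (u : V) : Set V :=
  {v | 1 ≤ f v ∧ G.dist u v ≤ f v}

/-- A dominating broadcast: every vertex hears some broadcast vertex. -/
def IsDominating (G : SimpleGraph V) (f : V → ℕ) : Prop :=
  IsBroadcast G f ∧ ∀ u, (hears G f u).Nonempty

/-- A minimal dominating broadcast. -/
def IsMinimalDominating (G : SimpleGraph V) (f : V → ℕ) : Prop :=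
  IsDominating G f ∧ ∀ g, IsDominating G g → (∀ v, g v ≤ f v) → g = f

/-- The broadcast domination number γ_b: minimum cost of a dominating broadcast. -/
noncomputable def broadcastDomination (G : SimpleGraph V) : ℕ :=
  sInf {c | ∃ f, IsDominating G f ∧ cost f = c}

/-- The upper broadcast domination number Γ_b: maximum cost of a minimal dominating broadcast. -/
noncomputable def upperBroadcastDomination (G : SimpleGraph V) : ℕ :=
  sSup {c | ∃ f, IsMinimalDominating G f ∧ cost f = c}

/-- The private f-neighborhood PN_f(v): vertices hearing only `v`. -/
def privateNbhd (G : SimpleGraph V) (f : V → ℕ) (v : V) : Set V :=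
  {u | hears G f u = {v}}

open Classical in
/-- The private f-border PB_f(v). -/
noncomputable def privateBorder (G : SimpleGraph V) (f : V → ℕ) (v : V) : Set V :=
  if f v = 1 ∧ privateNbhd G f v = {v} then {v}
  else {u | u ∈ privateNbhd G f v ∧ G.dist u v = f v}

/-- An irredundant broadcast: every broadcast vertex has a nonempty private border. -/
def IsIrredundant (G : SimpleGraph V) (f : V → ℕ) : Prop :=
  IsBroadcast G f ∧ ∀ v, 1 ≤ f v → (privateBorder G f v).Nonempty

/-- A maximal irredundant broadcast. -/
def IsMaximalIrredundant (G : SimpleGraph V) (f : V → ℕ) : Prop :=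
  IsIrredundant G f ∧ ∀ g, IsIrredundant G g → (∀ v, f v ≤ g v) → g = f

/-- The upper broadcast irredundance number IR_b: maximum cost of an irredundant broadcast. -/
noncomputable def upperBroadcastIrredundance (G : SimpleGraph V) : ℕ :=
  sSup {c | ∃ f, IsIrredundant G f ∧ cost f = c}

/-- The broadcast irredundance number ir_b: minimum cost of a maximal irredundant broadcast. -/
noncomputable def broadcastIrredundance (G : SimpleGraph V) : ℕ :=
  sInf {c | ∃ f, IsMaximalIrredundant G f ∧ cost f = c}

/-- An independent broadcast: every broadcast vertex hears only itself, i.e. |H_f(v)| = 1. -/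
def IsIndependent (G : SimpleGraph V) (f : V → ℕ) : Prop :=
  IsBroadcast G f ∧ ∀ v, 1 ≤ f v → hears G f v = {v}

/-- A maximal independent broadcast. -/
def IsMaximalIndependent (G : SimpleGraph V) (f : V → ℕ) : Prop :=
  IsIndependent G f ∧ ∀ g, IsIndependent G g → (∀ v, f v ≤ g v) → g = f

/-- The broadcast independence number β_b: maximum cost of an independent broadcast. -/
noncomputable def broadcastIndependence (G : SimpleGraph V) : ℕ :=
  sSup {c | ∃ f, IsIndependent G f ∧ cost f = c}

/-- The lower broadcast independence number i_b: minimum cost of a maximal independent broadcast. -/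
noncomputable def lowerBroadcastIndependence (G : SimpleGraph V) : ℕ :=
  sInf {c | ∃ f, IsMaximalIndependent G f ∧ cost f = c}

/-- A packing broadcast: every vertex hears at most one broadcast vertex. -/
def IsPacking (G : SimpleGraph V) (f : V → ℕ) : Prop :=
  IsBroadcast G f ∧ ∀ u, (hears G f u).Subsingleton

/-- A maximal packing broadcast. -/
def IsMaximalPacking (G : SimpleGraph V) (f : V → ℕ) : Prop :=
  IsPacking G f ∧ ∀ g, IsPacking G g → (∀ v, f v ≤ g v) → g = f

/-- The broadcast packing number P_b: maximum cost of a packing broadcast. -/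
noncomputable def broadcastPacking (G : SimpleGraph V) : ℕ :=
  sSup {c | ∃ f, IsPacking G f ∧ cost f = c}

/-- The lower broadcast packing number p_b: minimum cost of a maximal packing broadcast. -/
noncomputable def lowerBroadcastPacking (G : SimpleGraph V) : ℕ :=
  sInf {c | ∃ f, IsMaximalPacking G f ∧ cost f = c}

end Broadcast

/-!
Broadcasting with strength `ecc v = ⌊n/2⌋` from a single vertex `v` is a packing. Conversely, the
closed balls of radius `f v` around the broadcast vertices of a packing `f` are pairwise disjoint,
and in `C_n` such a ball has at least `2 f v` vertices since `f v ≤ ⌊n/2⌋`; hence `2 σ(f) ≤ n`.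
-/

theorem Fin.val_sub_add_val_eq_or {n : ℕ} (a b : Fin n) :
    (a - b).val + b.val = a.val ∨ (a - b).val + b.val = a.val + n := by
  rcases le_or_gt b a with h | h
  · left
    rw [Fin.sub_val_of_le h]
    exact Nat.sub_add_cancel h
  · right
    rw [Fin.coe_sub_iff_lt.mpr h]
    have : b.val < n := b.isLt
    have : a.val < b.val := h
    omega

namespace SimpleGraph

variable {V : Type*} {G : SimpleGraph V} {φ : V → ℕ}

theorem Walk.apply_le_apply_add_length (hφ : ∀ ⦃x y⦄, G.Adj x y → φ x ≤ φ y + 1) :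
    ∀ {u v : V} (p : G.Walk u v), φ u ≤ φ v + p.length
  | _, _, .nil => by simp
  | _, _, .cons h p => by
    have := p.apply_le_apply_add_length hφ
    have := hφ h
    simp only [Walk.length_cons]
    omega

theorem Reachable.apply_le_apply_add_dist {u v : V} (huv : G.Reachable u v)
    (hφ : ∀ ⦃x y⦄, G.Adj x y → φ x ≤ φ y + 1) : φ u ≤ φ v + G.dist u v := by
  obtain ⟨p, hp⟩ := huv.exists_walk_length_eq_dist
  exact hp ▸ p.apply_le_apply_add_length hφ

theorem dist_le_apply {v : V} (hφ : ∀ w, w ≠ v → ∃ w', G.Adj w w' ∧ φ w' < φ w) (u : V) :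
    G.dist u v ≤ φ u := by
  induction h : φ u using Nat.strong_induction_on generalizing u with
  | _ k ih =>
    rcases eq_or_ne u v with rfl | huv
    · simp
    obtain ⟨w, hadj, hw⟩ := hφ u huv
    calc G.dist u v ≤ G.dist u w + G.dist w v := hadj.reachable.dist_triangle_left v
      _ ≤ 1 + φ w := by
        rw [dist_eq_one_iff_adj.mpr hadj]
        exact Nat.add_le_add_left (ih _ (h ▸ hw) w rfl) 1
      _ ≤ k := by omega

section Cycle

open Finset

variable {n : ℕ}

theorem cycleGraph_dist_le_val_sub (u v : Fin n) : (cycleGraph n).dist u v ≤ (u - v).val := by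
  refine dist_le_apply (φ := fun w => (w - v).val) (fun w hwv => ?_) u
  match n, w, v, hwv with
  | 0, w, _, _ => exact w.elim0
  | 1, w, v, hwv => exact absurd (Subsingleton.elim w v) hwv
  | n + 2, w, v, hwv =>
    refine ⟨w - 1, by simp [cycleGraph_adj], ?_⟩
    rw [sub_right_comm, Fin.coe_sub_one, if_neg (sub_ne_zero.mpr hwv)]
    have : (w - v).val ≠ 0 := Fin.val_ne_of_ne (sub_ne_zero.mpr hwv)
    omega

theorem cycleGraph_dist (u v : Fin n) :
    (cycleGraph n).dist u v = min (u - v).val (v - u).val := by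
  have : NeZero n := NeZero.of_pos u.pos
  refine le_antisymm (le_min (cycleGraph_dist_le_val_sub u v)
    (dist_comm (G := cycleGraph n) ▸ cycleGraph_dist_le_val_sub v u)) ?_
  have lipschitz : ∀ ⦃x y : Fin n⦄, (cycleGraph n).Adj x y →
      min (x - v).val (v - x).val ≤ min (y - v).val (v - y).val + 1 := by
    intro x y hxy
    rw [cycleGraph_adj'] at hxy
    have := Fin.val_sub_add_val_eq_or x v
    have := Fin.val_sub_add_val_eq_or v x
    have := Fin.val_sub_add_val_eq_or y v
    have := Fin.val_sub_add_val_eq_or v y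
    have := Fin.val_sub_add_val_eq_or x y
    have := Fin.val_sub_add_val_eq_or y x
    have := x.isLt
    have := y.isLt
    have := v.isLt
    omega
  simpa using (cycleGraph_preconnected u v).apply_le_apply_add_dist lipschitz

theorem two_mul_le_card_filter_cycleGraph_dist_le {r : ℕ} (v : Fin n) (hr : 2 * r ≤ n) :
    2 * r ≤ #{u | (cycleGraph n).dist u v ≤ r} := by
  have : NeZero n := NeZero.of_pos v.pos
  rcases Nat.eq_zero_or_pos r with rfl | hr0
  · exact Nat.zero_le _
  let ρ : Fin n := ⟨r, by omega⟩
  calc 2 * r = #{k : Fin n | k.val < 2 * r} := by rw [Fin.card_filter_val_lt]; omega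
    _ ≤ _ := by
      refine card_le_card_of_injOn (fun k => v + k - ρ) (fun k hk => ?_)
        (fun k _ l _ hkl => add_left_cancel (sub_left_inj.mp hkl))
      simp only [coe_filter, mem_univ, true_and, Set.mem_ofPred_eq] at hk ⊢
      have hρ : ρ.val = r := rfl
      rcases le_or_gt ρ k with hρk | hkρ
      · have := cycleGraph_dist_le_val_sub (v + k - ρ) v
        rw [show v + k - ρ - v = k - ρ by abel, Fin.sub_val_of_le hρk] at this
        omega
      · have := cycleGraph_dist_le_val_sub v (v + k - ρ)
        rw [dist_comm, show v - (v + k - ρ) = ρ - k by abel, Fin.sub_val_of_le hkρ.le] at this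
        omega

end Cycle

end SimpleGraph

namespace Broadcast

open Finset

variable {V : Type*} [Fintype V] {G : SimpleGraph V} {f : V → ℕ}

theorem isPacking_zero : IsPacking G 0 :=
  ⟨fun _ => Nat.zero_le _, fun _ _ hv => absurd hv.1 (by simp)⟩

theorem isPacking_single_ecc [DecidableEq V] (v : V) : IsPacking G (Pi.single v (ecc G v)) := by
  have only_v : ∀ w, 1 ≤ Pi.single (M := fun _ => ℕ) v (ecc G v) w → w = v := fun w hw => by
    by_contra hwv
    simp [hwv] at hw
  refine ⟨fun w => ?_, fun u w hw w' hw' => (only_v w hw.1).trans (only_v w' hw'.1).symm⟩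
  rcases eq_or_ne w v with rfl | hwv
  · simp
  · simp [hwv]

theorem bddAbove_packingCosts : BddAbove {c | ∃ f, IsPacking G f ∧ cost f = c} :=
  ⟨∑ v, ecc G v, by
    rintro _ ⟨f, hf, rfl⟩
    exact sum_le_sum fun v _ => hf.1 v⟩

theorem IsPacking.cost_le_broadcastPacking (hf : IsPacking G f) : cost f ≤ broadcastPacking G :=
  le_csSup bddAbove_packingCosts ⟨f, hf, rfl⟩

theorem broadcastPacking_le {c : ℕ} (h : ∀ f, IsPacking G f → cost f ≤ c) :
    broadcastPacking G ≤ c :=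
  csSup_le ⟨0, 0, isPacking_zero, by simp [cost]⟩ (by rintro _ ⟨f, hf, rfl⟩; exact h f hf)

theorem ecc_le_broadcastPacking (v : V) : ecc G v ≤ broadcastPacking G := by
  classical
  simpa [cost] using IsPacking.cost_le_broadcastPacking (isPacking_single_ecc (G := G) v)

theorem IsPacking.mul_cost_le_card {c : ℕ} (hf : IsPacking G f)
    (hball : ∀ v, c * f v ≤ #{u | G.dist u v ≤ f v}) : c * cost f ≤ Fintype.card V := by
  classical
  set B : Finset V := {v | 1 ≤ f v}
  have disjoint : (B : Set V).PairwiseDisjoint fun v => ({u | G.dist u v ≤ f v} : Finset V) := by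
    intro v hv w hw hvw
    refine disjoint_left.mpr fun u huv huw => hvw (hf.2 u ?_ ?_) <;>
      simp_all [B, hears]
  calc c * cost f = ∑ v ∈ B, c * f v := by
        rw [cost, mul_sum, sum_filter_of_ne]
        intro v _ hv
        exact Nat.one_le_iff_ne_zero.mpr (right_ne_zero_of_mul hv)
    _ ≤ ∑ v ∈ B, #{u | G.dist u v ≤ f v} := sum_le_sum fun v _ => hball v
    _ = #(B.biUnion fun v => {u | G.dist u v ≤ f v}) := (card_biUnion disjoint).symm
    _ ≤ Fintype.card V := card_le_univ _

theorem ecc_cycleGraph {n : ℕ} (v : Fin n) : ecc (cycleGraph n) v = n / 2 := by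
  have : NeZero n := NeZero.of_pos v.pos
  refine le_antisymm (Finset.sup_le fun u _ => ?_) ?_
  · have := Fin.val_sub_add_val_eq_or v u
    have := Fin.val_sub_add_val_eq_or u v
    have := (v - u).isLt
    have := (u - v).isLt
    rw [cycleGraph_dist]
    omega
  · let antipode : Fin n := v + ⟨n / 2, by have := v.pos; omega⟩
    have : (antipode - v).val = n / 2 := by simp [antipode]
    have := Fin.val_sub_add_val_eq_or v antipode
    have := Fin.val_sub_add_val_eq_or antipode v
    have := (v - antipode).isLt
    refine le_trans ?_ (Finset.le_sup (mem_univ antipode))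
    rw [cycleGraph_dist]
    omega

end Broadcast

open Broadcast in
theorem broadcastPacking_cycleGraph_general (n : ℕ) :
    broadcastPacking (SimpleGraph.cycleGraph n) = n / 2 := by
  refine le_antisymm (broadcastPacking_le fun f hf => ?_) ?_
  · have radius_le : ∀ v, 2 * f v ≤ n := fun v => by
      have := hf.1 v
      rw [ecc_cycleGraph] at this
      omega
    have := hf.mul_cost_le_card fun v =>
      two_mul_le_card_filter_cycleGraph_dist_le v (radius_le v)
    rw [Fintype.card_fin] at this
    omega
  · rcases n with _ | n
    · exact Nat.zero_le _
    · exact ecc_cycleGraph (0 : Fin (n + 1)) ▸ ecc_le_broadcastPacking 0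

open Broadcast in
/-- For every integer n ≥ 3, P_b(C_n) = diam(C_n) = ⌊n/2⌋. -/
theorem broadcastPacking_cycleGraph (n : ℕ) (hn : 3 ≤ n) :
    broadcastPacking (SimpleGraph.cycleGraph n) = n / 2 :=
  broadcastPacking_cycleGraph_general n
end

section
/- For every integer n ≥ 2, there exists a maximal packing broadcast f on the path P_n whose cost equals the lower broadcast packing number p_b(P_n) and such that f(v) = 1 for every f-broadcast vertex v (i.e. f takes only the values 0 and 1). -/
/-!
On a path, a broadcast `f` is a packing iff `f u + f w < |u - w|` for all distinct broadcast
vertices, and a packing is maximal iff no vertex can be raised by one: every `v` broadcasts at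
its eccentricity or lies within `f v + f w + 1` of another broadcast vertex `w`.

For a maximal packing, count for every vertex the broadcast vertices `u` within `f u + 1` of
it. A broadcast vertex is counted by at most `2 f u + 3` vertices, every vertex is counted at
least once, and the two middle vertices of each tight gap (`|u - w| = f u + f w + 1`) twice, so
`n + 2t ≤ 2σ + 3b` with `b` broadcast vertices and `t` tight gaps. Unless some vertex
broadcasts at its eccentricity (and then `2σ ≥ n - 1`), every broadcast vertex ends a tight
gap, so `b ≤ 2t`; with `b ≤ σ` this gives `n + σ % 2 ≤ 4σ`. The least such `σ` is attained
with all values one: pairs of sites three apart, one pair per eight vertices, plus a single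
site when `σ` is odd.
-/

open SimpleGraph

namespace SimpleGraph

variable {V : Type*} {G : SimpleGraph V} {u w : V}

theorem Reachable.exists_dist_le_dist_le (h : G.Reachable u w) {a b : ℕ}
    (hab : G.dist u w ≤ a + b) : ∃ x, G.dist u x ≤ a ∧ G.dist x w ≤ b := by
  obtain ⟨p, hp⟩ := h.exists_walk_length_eq_dist
  refine ⟨p.getVert a, (dist_le (p.take a)).trans ?_, (dist_le (p.drop a)).trans ?_⟩
  · simp
  · simp only [Walk.drop_length]
    omega

section Path

variable {n : ℕ}

theorem pathGraph_dist_le_of_val_eq_add (k : ℕ) {u v : Fin n} (h : (v : ℕ) = u + k) :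
    (pathGraph n).dist u v ≤ k := by
  induction k generalizing v with
  | zero => simp [Fin.ext h]
  | succ k ih =>
    let w : Fin n := ⟨u + k, by omega⟩
    have hwv : (pathGraph n).Adj w v := pathGraph_adj.2 (Or.inl (by simp only [w]; omega))
    calc (pathGraph n).dist u v ≤ (pathGraph n).dist u w + (pathGraph n).dist w v :=
          hwv.reachable.dist_triangle_right u
      _ ≤ k + 1 := add_le_add (ih rfl) (dist_eq_one_iff_adj.2 hwv).le

theorem Walk.natDist_le_length {u v : Fin n} (p : (pathGraph n).Walk u v) :
    Nat.dist u v ≤ p.length := by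
  induction p with
  | nil => simp
  | cons h p ih =>
    rw [pathGraph_adj] at h
    simp only [Walk.length_cons, Nat.dist] at *
    omega

theorem pathGraph_dist (u v : Fin n) : (pathGraph n).dist u v = Nat.dist u v := by
  refine le_antisymm ?_ ?_
  · rcases le_total (u : ℕ) v with h | h
    · exact pathGraph_dist_le_of_val_eq_add _ (by unfold Nat.dist; omega)
    · rw [dist_comm]
      exact pathGraph_dist_le_of_val_eq_add _ (by unfold Nat.dist; omega)
  · obtain ⟨p, hp⟩ := (pathGraph_preconnected n u v).exists_walk_length_eq_dist
    exact hp ▸ Walk.natDist_le_length p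

end Path

end SimpleGraph

namespace Broadcast

open SimpleGraph Finset Function

section General

variable {V : Type*} [Fintype V] {G : SimpleGraph V} {f g : V → ℕ}

theorem IsPacking.mono (hf : IsPacking G f) (hgf : g ≤ f) : IsPacking G g :=
  ⟨fun v => (hgf v).trans (hf.1 v), fun u a ha b hb =>
    hf.2 u ⟨ha.1.trans (hgf a), ha.2.trans (hgf a)⟩ ⟨hb.1.trans (hgf b), hb.2.trans (hgf b)⟩⟩

theorem isMaximalPacking_iff_forall_not_isPacking_update [DecidableEq V] :
    IsMaximalPacking G f ↔ IsPacking G f ∧ ∀ v, ¬IsPacking G (update f v (f v + 1)) := by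
  refine ⟨fun hf => ⟨hf.1, fun v hv => ?_⟩, fun hf => ⟨hf.1, fun g hg hfg => ?_⟩⟩
  · have := congrFun (hf.2 _ hv fun w => ?_) v
    · simp at this
    · rcases eq_or_ne w v with rfl | hw <;> simp [*]
  · by_contra hne
    obtain ⟨v, hv⟩ : ∃ v, f v < g v := by
      by_contra! h
      exact hne (funext fun v => le_antisymm (h v) (hfg v))
    refine hf.2 v (hg.mono fun w => ?_)
    rcases eq_or_ne w v with rfl | hw <;> simp [*]

theorem isPacking_iff (hG : G.Preconnected) :
    IsPacking G f ↔
      IsBroadcast G f ∧ ∀ u w, u ≠ w → 1 ≤ f u → 1 ≤ f w → f u + f w < G.dist u w := by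
  refine ⟨fun hf => ⟨hf.1, fun u w huw hu hw => ?_⟩, fun ⟨hb, hsep⟩ => ⟨hb, ?_⟩⟩
  · by_contra! hle
    obtain ⟨x, hux, hxw⟩ := (hG u w).exists_dist_le_dist_le hle
    exact huw (hf.2 x ⟨hu, dist_comm.trans_le hux⟩ ⟨hw, hxw⟩)
  · intro x a ha b hb
    by_contra hab
    refine (hsep a b hab ha.1 hb.1).not_ge ?_
    calc G.dist a b ≤ G.dist a x + G.dist x b := (hG a x).dist_triangle_left b
      _ ≤ f a + f b := add_le_add (dist_comm.trans_le ha.2) hb.2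

theorem isPacking_update_succ_iff [DecidableEq V] (hG : G.Preconnected) (hf : IsPacking G f)
    (v : V) :
    IsPacking G (update f v (f v + 1)) ↔
      f v + 1 ≤ ecc G v ∧ ∀ w, w ≠ v → 1 ≤ f w → f v + 1 + f w < G.dist v w := by
  rw [isPacking_iff hG] at hf ⊢
  refine ⟨fun ⟨hb, hsep⟩ => ⟨by simpa using hb v, fun w hw h1 => ?_⟩,
    fun ⟨hv, hsep⟩ => ⟨?_, ?_⟩⟩
  · simpa [hw] using hsep v w hw.symm (by simp) (by simpa [hw])
  · intro u
    rcases eq_or_ne u v with rfl | hu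
    · simpa
    · simpa [hu] using hf.1 u
  · intro a b hab ha hb
    rcases eq_or_ne a v with rfl | hav
    · simpa [hab.symm] using hsep b hab.symm (by simpa [hab.symm] using hb)
    rcases eq_or_ne b v with rfl | hbv
    · simpa [hab, dist_comm, add_comm] using hsep a hav (by simpa [hav] using ha)
    · simpa [hav, hbv] using
        hf.2 a b hab (by simpa [hav] using ha) (by simpa [hbv] using hb)

theorem isMaximalPacking_iff (hG : G.Preconnected) :
    IsMaximalPacking G f ↔ IsPacking G f ∧
      ∀ v, ecc G v ≤ f v ∨ ∃ w, w ≠ v ∧ 1 ≤ f w ∧ G.dist v w ≤ f v + 1 + f w := by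
  classical
  rw [isMaximalPacking_iff_forall_not_isPacking_update]
  refine and_congr_right fun hf => forall_congr' fun v => ?_
  rw [isPacking_update_succ_iff hG hf]
  push Not
  rw [imp_iff_not_or, not_le, Nat.lt_succ_iff]

def broadcastVertices (f : V → ℕ) : Finset V := {v | 1 ≤ f v}

theorem card_broadcastVertices_le_cost : #(broadcastVertices f) ≤ cost f := by
  have := card_nsmul_le_sum (broadcastVertices f) f 1 fun _ hv => (mem_filter.1 hv).2
  rw [smul_eq_mul, mul_one] at this
  exact this.trans (sum_le_sum_of_subset (subset_univ _))

theorem lowerBroadcastPacking_eq_of_forall_cost_le (hf : IsMaximalPacking G f)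
    (hmin : ∀ g, IsMaximalPacking G g → cost f ≤ cost g) : lowerBroadcastPacking G = cost f :=
  le_antisymm (Nat.sInf_le ⟨f, hf, rfl⟩)
    (le_csInf ⟨_, f, hf, rfl⟩ fun _ ⟨g, hg, hc⟩ => hc ▸ hmin g hg)

end General

section Path

variable {n : ℕ}

theorem ecc_pathGraph (v : Fin n) : ecc (pathGraph n) v = max (v : ℕ) (n - 1 - v) := by
  have := v.2
  refine le_antisymm (Finset.sup_le fun u _ => ?_) ?_
  · have := u.2
    rw [pathGraph_dist, Nat.dist]
    omega
  · have key (u : Fin n) : Nat.dist v u ≤ ecc (pathGraph n) v :=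
      pathGraph_dist v u ▸ le_sup (f := fun u => (pathGraph n).dist v u) (mem_univ u)
    have h0 := key ⟨0, by omega⟩
    have h1 := key ⟨n - 1, by omega⟩
    simp only [Nat.dist] at h0 h1
    omega

variable {f : Fin n → ℕ}

theorem isMaximalPacking_pathGraph_iff :
    IsMaximalPacking (pathGraph n) f ↔
      (∀ v, f v ≤ max (v : ℕ) (n - 1 - v)) ∧
      (∀ u w, u ≠ w → 1 ≤ f u → 1 ≤ f w → f u + f w < Nat.dist u w) ∧
      ∀ v : Fin n, max (v : ℕ) (n - 1 - v) ≤ f v ∨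
        ∃ w, w ≠ v ∧ 1 ≤ f w ∧ Nat.dist v w ≤ f v + 1 + f w := by
  simp only [isMaximalPacking_iff (pathGraph_preconnected n),
    isPacking_iff (pathGraph_preconnected n), IsBroadcast, ecc_pathGraph, pathGraph_dist,
    and_assoc]

def nearCount (f : Fin n → ℕ) (z : Fin n) : ℕ :=
  #((broadcastVertices f).filter fun u : Fin n => Nat.dist z u ≤ f u + 1)

theorem card_filter_dist_le (u : Fin n) (r : ℕ) :
    #{z : Fin n | Nat.dist z u ≤ r} ≤ 2 * r + 1 := by
  have := card_le_card_of_injOn (s := {z : Fin n | Nat.dist z u ≤ r}) (t := range (2 * r + 1))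
    (fun z : Fin n => z + r - u)
    (fun z hz => by
      rw [coe_filter, Set.mem_ofPred_eq, Nat.dist] at hz
      simp only [coe_range, Set.mem_Iio]
      omega)
    (fun z hz z' hz' h => by
      rw [coe_filter, Set.mem_ofPred_eq, Nat.dist] at hz hz'
      dsimp only at h
      exact Fin.ext (by omega))
  simpa using this

theorem sum_nearCount_le : ∑ z, nearCount f z ≤ 2 * cost f + 3 * #(broadcastVertices f) :=
  calc ∑ z, nearCount f z
      = ∑ u ∈ broadcastVertices f, #{z : Fin n | Nat.dist z u ≤ f u + 1} := by
        simp only [nearCount, broadcastVertices, card_filter, sum_filter]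
        rw [sum_comm]
        refine sum_congr rfl fun u _ => ?_
        split_ifs <;> simp
    _ ≤ ∑ u ∈ broadcastVertices f, (2 * f u + 3) := sum_le_sum fun u _ => card_filter_dist_le u _
    _ = 2 * cost f + 3 * #(broadcastVertices f) := by
        rw [sum_add_distrib, ← mul_sum, sum_const, smul_eq_mul, mul_comm _ 3, cost,
          broadcastVertices, sum_filter_of_ne fun v _ hv => Nat.one_le_iff_ne_zero.2 hv]

def tightPairs (f : Fin n → ℕ) : Finset (Fin n × Fin n) :=
  {p | 1 ≤ f p.1 ∧ 1 ≤ f p.2 ∧ (p.1 : ℕ) + f p.1 + f p.2 + 1 = p.2}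

def gapMiddle (f : Fin n → ℕ) (p : Fin n × Fin n) : Finset (Fin n) :=
  {z | (z : ℕ) = p.1 + f p.1 ∨ (z : ℕ) = p.1 + f p.1 + 1}

theorem mem_tightPairs {p : Fin n × Fin n} :
    p ∈ tightPairs f ↔ 1 ≤ f p.1 ∧ 1 ≤ f p.2 ∧ (p.1 : ℕ) + f p.1 + f p.2 + 1 = p.2 := by
  simp [tightPairs]

theorem le_or_le_of_mem_tightPairs
    (hsep : ∀ u w, u ≠ w → 1 ≤ f u → 1 ≤ f w → f u + f w < Nat.dist u w)
    {p : Fin n × Fin n} (hp : p ∈ tightPairs f) {b : Fin n} (hb : 1 ≤ f b) :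
    (b : ℕ) ≤ p.1 ∨ (p.2 : ℕ) ≤ b := by
  rw [mem_tightPairs] at hp
  by_contra! h
  have h1 := hsep b p.1 (by rintro rfl; omega) hb hp.1
  have h2 := hsep b p.2 (by rintro rfl; omega) hb hp.2.1
  unfold Nat.dist at h1 h2
  omega

theorem pairwiseDisjoint_gapMiddle
    (hsep : ∀ u w, u ≠ w → 1 ≤ f u → 1 ≤ f w → f u + f w < Nat.dist u w) :
    (tightPairs f : Set (Fin n × Fin n)).PairwiseDisjoint (gapMiddle f) := by
  intro p hp q hq hpq
  refine disjoint_left.2 fun z hzp hzq => hpq ?_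
  have := le_or_le_of_mem_tightPairs hsep hp (mem_tightPairs.1 hq).1
  have := le_or_le_of_mem_tightPairs hsep hp (mem_tightPairs.1 hq).2.1
  have := le_or_le_of_mem_tightPairs hsep hq (mem_tightPairs.1 hp).1
  have := le_or_le_of_mem_tightPairs hsep hq (mem_tightPairs.1 hp).2.1
  have := mem_tightPairs.1 hp
  have := mem_tightPairs.1 hq
  simp only [gapMiddle, mem_filter, mem_univ, true_and] at hzp hzq
  exact Prod.ext (Fin.ext (by omega)) (Fin.ext (by omega))

theorem card_gapMiddle {p : Fin n × Fin n} (hp : p ∈ tightPairs f) : #(gapMiddle f p) = 2 := by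
  rw [mem_tightPairs] at hp
  have := p.2.2
  refine card_eq_two.2 ⟨⟨p.1 + f p.1, by omega⟩, ⟨p.1 + f p.1 + 1, by omega⟩, by simp, ?_⟩
  ext z
  simp [gapMiddle, Fin.ext_iff]

theorem two_le_nearCount {p : Fin n × Fin n} (hp : p ∈ tightPairs f) {z : Fin n}
    (hz : z ∈ gapMiddle f p) : 2 ≤ nearCount f z := by
  rw [mem_tightPairs] at hp
  simp only [gapMiddle, mem_filter, mem_univ, true_and] at hz
  unfold nearCount
  refine one_lt_card.2 ⟨p.1, ?_, p.2, ?_, fun h => by rw [h] at hp; omega⟩ <;>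
    simp only [broadcastVertices, mem_filter, mem_univ, true_and] <;> unfold Nat.dist <;> omega

theorem card_add_two_mul_card_tightPairs_le
    (hsep : ∀ u w, u ≠ w → 1 ≤ f u → 1 ≤ f w → f u + f w < Nat.dist u w)
    (hcov : ∀ z : Fin n, ∃ u, 1 ≤ f u ∧ Nat.dist z u ≤ f u + 1) :
    n + 2 * #(tightPairs f) ≤ ∑ z, nearCount f z := by
  set U := (tightPairs f).biUnion (gapMiddle f)
  have hU : #U = 2 * #(tightPairs f) := by
    rw [card_biUnion (pairwiseDisjoint_gapMiddle hsep),
      sum_congr rfl fun p hp => card_gapMiddle hp, sum_const, smul_eq_mul, mul_comm]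
  calc n + 2 * #(tightPairs f) = ∑ z, (1 + if z ∈ U then 1 else 0) := by
        simp [sum_add_distrib, hU]
    _ ≤ ∑ z, nearCount f z := sum_le_sum fun z _ => by
        split_ifs with hz
        · obtain ⟨p, hp, hzp⟩ := mem_biUnion.1 hz
          exact two_le_nearCount hp hzp
        · obtain ⟨u, hu, hzu⟩ := hcov z
          exact card_pos.2 ⟨u, mem_filter.2 ⟨by simpa [broadcastVertices] using hu, hzu⟩⟩

theorem card_broadcastVertices_le_two_mul_card_tightPairs
    (htight : ∀ u, 1 ≤ f u → ∃ w, (u, w) ∈ tightPairs f ∨ (w, u) ∈ tightPairs f) :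
    #(broadcastVertices f) ≤ 2 * #(tightPairs f) := by
  classical
  calc #(broadcastVertices f)
      ≤ #((tightPairs f).image Prod.fst ∪ (tightPairs f).image Prod.snd) := by
        refine card_le_card fun u hu => ?_
        obtain ⟨w, h | h⟩ := htight u (by simpa [broadcastVertices] using hu)
        · exact mem_union_left _ (mem_image.2 ⟨_, h, rfl⟩)
        · exact mem_union_right _ (mem_image.2 ⟨_, h, rfl⟩)
    _ ≤ #(tightPairs f) + #(tightPairs f) :=
        (card_union_le _ _).trans (add_le_add card_image_le card_image_le)
    _ = 2 * #(tightPairs f) := (two_mul _).symm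

theorem card_add_cost_mod_two_le (hn : 2 ≤ n) (hf : IsMaximalPacking (pathGraph n) f) :
    n + cost f % 2 ≤ 4 * cost f := by
  obtain ⟨-, hsep, hnear⟩ := isMaximalPacking_pathGraph_iff.1 hf
  by_cases hcap : ∃ u, 1 ≤ f u ∧ max (u : ℕ) (n - 1 - u) ≤ f u
  · obtain ⟨u, hu, hcap⟩ := hcap
    have : f u ≤ cost f := single_le_sum (fun _ _ => Nat.zero_le _) (mem_univ u)
    have := u.2
    omega
  push Not at hcap
  have hcov (z : Fin n) : ∃ u, 1 ≤ f u ∧ Nat.dist z u ≤ f u + 1 := by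
    rcases Nat.eq_zero_or_pos (f z) with hz | hz
    · rcases hnear z with h | ⟨w, -, hw, hzw⟩
      · have := z.2
        omega
      · exact ⟨w, hw, by omega⟩
    · exact ⟨z, hz, by simp⟩
  have htight (u : Fin n) (hu : 1 ≤ f u) :
      ∃ w, (u, w) ∈ tightPairs f ∨ (w, u) ∈ tightPairs f := by
    rcases hnear u with h | ⟨w, hwu, hw, huw⟩
    · exact absurd h (hcap u hu).not_ge
    have := hsep u w hwu.symm hu hw
    refine ⟨w, ?_⟩
    simp only [mem_tightPairs]
    unfold Nat.dist at *
    omega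
  have := card_add_two_mul_card_tightPairs_le hsep hcov
  have := sum_nearCount_le (f := f)
  have := card_broadcastVertices_le_two_mul_card_tightPairs htight
  have := card_broadcastVertices_le_cost (f := f)
  omega

end Path

section Construction

variable {n : ℕ}

def ofSites (n : ℕ) (S : Finset ℕ) : Fin n → ℕ := fun v => if (v : ℕ) ∈ S then 1 else 0

theorem one_le_ofSites_iff {S : Finset ℕ} {v : Fin n} : 1 ≤ ofSites n S v ↔ (v : ℕ) ∈ S := by
  unfold ofSites
  split_ifs with h <;> simp [h]

theorem cost_ofSites_le (S : Finset ℕ) : cost (ofSites n S) ≤ #S := by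
  have : cost (ofSites n S) = #{v : Fin n | (v : ℕ) ∈ S} := by
    simp [cost, ofSites]
  rw [this]
  exact card_le_card_of_injOn (fun v : Fin n => (v : ℕ)) (fun v hv => by simpa using hv)
    (fun v _ w _ h => Fin.ext h)

theorem isMaximalPacking_ofSites (hn : 2 ≤ n) {S : Finset ℕ} (hS : ∀ a ∈ S, a < n)
    (hsep : ∀ a ∈ S, ∀ b ∈ S, a ≠ b → 2 < Nat.dist a b)
    (hcov : ∀ z < n, ∃ a ∈ S, Nat.dist z a ≤ 2)
    (hpartner : ∀ a ∈ S, max a (n - 1 - a) ≤ 1 ∨ ∃ b ∈ S, b ≠ a ∧ Nat.dist a b ≤ 3) :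
    IsMaximalPacking (pathGraph n) (ofSites n S) := by
  refine isMaximalPacking_pathGraph_iff.2 ⟨fun v => ?_, fun u w huw hu hw => ?_, fun v => ?_⟩
  · have := v.2
    unfold ofSites
    split_ifs <;> omega
  · rw [one_le_ofSites_iff] at hu hw
    simpa [ofSites, hu, hw] using hsep _ hu _ hw (Fin.val_injective.ne huw)
  · by_cases hv : (v : ℕ) ∈ S
    · simp only [ofSites, hv, if_true]
      rcases hpartner _ hv with h | ⟨b, hb, hbv, hvb⟩
      · exact Or.inl h
      · refine Or.inr ⟨⟨b, hS b hb⟩, fun h => hbv (congrArg Fin.val h), ?_⟩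
        simp [hb, hvb]
    · obtain ⟨a, ha, hva⟩ := hcov v v.2
      refine Or.inr ⟨⟨a, hS a ha⟩, fun h => hv (h ▸ ha), ?_⟩
      simp [ofSites, hv, ha, hva]

/-- Meant for the least `c` with `n + c % 2 ≤ 4 * c`. Each pair of sites three apart covers a
block of eight vertices; the last pair is pushed left so as to fit in the path, and an odd `c`
adds one site covering the last few vertices. -/
def sites (n c : ℕ) : Finset ℕ :=
  ((range (c / 2)).biUnion fun j => {min (8 * j + 2) (n - 4), min (8 * j + 2) (n - 4) + 3}) ∪
    if c % 2 = 1 then {max (8 * (c / 2)) 1} else ∅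

variable {n c : ℕ}

theorem mem_sites {z : ℕ} :
    z ∈ sites n c ↔
      (∃ j < c / 2, z = min (8 * j + 2) (n - 4) ∨ z = min (8 * j + 2) (n - 4) + 3) ∨
        (c % 2 = 1 ∧ z = max (8 * (c / 2)) 1) := by
  unfold sites
  split_ifs with h <;> simp [h, or_comm]

theorem card_sites_le : #(sites n c) ≤ c := by
  unfold sites
  refine (card_union_le _ _).trans ?_
  have hpairs := card_biUnion_le_card_mul (range (c / 2))
    (fun j => {min (8 * j + 2) (n - 4), min (8 * j + 2) (n - 4) + 3}) 2
    fun j _ => card_le_two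
  rw [card_range] at hpairs
  split_ifs with h <;> simp only [card_singleton, card_empty] <;> omega

theorem lt_of_mem_sites (hn : 2 ≤ n) (hc' : 4 * (c - 1) < n + (c - 1) % 2)
    {a : ℕ} (ha : a ∈ sites n c) : a < n := by
  rcases mem_sites.1 ha with ⟨j, hj, rfl | rfl⟩ | ⟨hodd, rfl⟩ <;> omega

theorem two_lt_dist_of_mem_sites (hc : n + c % 2 ≤ 4 * c) (hc' : 4 * (c - 1) < n + (c - 1) % 2)
    {a b : ℕ} (ha : a ∈ sites n c) (hb : b ∈ sites n c) (hab : a ≠ b) : 2 < Nat.dist a b := by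
  unfold Nat.dist
  rcases mem_sites.1 ha with ⟨j, hj, rfl | rfl⟩ | ⟨hodd, rfl⟩ <;>
    rcases mem_sites.1 hb with ⟨j', hj', rfl | rfl⟩ | ⟨hodd', rfl⟩ <;> omega

theorem exists_mem_sites_dist_le_two (hc : n + c % 2 ≤ 4 * c) {z : ℕ} (hz : z < n) :
    ∃ a ∈ sites n c, Nat.dist z a ≤ 2 := by
  unfold Nat.dist
  by_cases hpairs : z < 8 * (c / 2)
  · by_cases hleft : z ≤ min (8 * (z / 8) + 2) (n - 4) + 1
    · exact ⟨_, mem_sites.2 (Or.inl ⟨z / 8, by omega, Or.inl rfl⟩), by omega⟩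
    · exact ⟨_, mem_sites.2 (Or.inl ⟨z / 8, by omega, Or.inr rfl⟩), by omega⟩
  · exact ⟨_, mem_sites.2 (Or.inr ⟨by omega, rfl⟩), by omega⟩

theorem exists_mem_sites_partner (hc : n + c % 2 ≤ 4 * c) (hc' : 4 * (c - 1) < n + (c - 1) % 2)
    {a : ℕ} (ha : a ∈ sites n c) :
    max a (n - 1 - a) ≤ 1 ∨ ∃ b ∈ sites n c, b ≠ a ∧ Nat.dist a b ≤ 3 := by
  unfold Nat.dist
  rcases mem_sites.1 ha with ⟨j, hj, rfl | rfl⟩ | ⟨hodd, rfl⟩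
  · exact Or.inr ⟨_, mem_sites.2 (Or.inl ⟨j, hj, Or.inr rfl⟩), by omega, by omega⟩
  · exact Or.inr ⟨_, mem_sites.2 (Or.inl ⟨j, hj, Or.inl rfl⟩), by omega, by omega⟩
  · by_cases hc2 : c / 2 = 0
    · exact Or.inl (by omega)
    · exact Or.inr ⟨_, mem_sites.2 (Or.inl ⟨c / 2 - 1, by omega, Or.inr rfl⟩), by omega,
        by omega⟩

end Construction

end Broadcast

open Broadcast in
/-- For every integer n ≥ 2, there exists a p_b-broadcast f on P_n such that
f v = 1 for every f-broadcast vertex v. -/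
theorem exists_pb_broadcast_zero_one_pathGraph (n : ℕ) (hn : 2 ≤ n) :
    ∃ f : Fin n → ℕ, IsMaximalPacking (SimpleGraph.pathGraph n) f ∧
      cost f = lowerBroadcastPacking (SimpleGraph.pathGraph n) ∧
      ∀ v : Fin n, 1 ≤ f v → f v = 1 := by
  have hex : ∃ c, n + c % 2 ≤ 4 * c := ⟨n, by omega⟩
  have hc := Nat.find_spec hex
  have hc' : 4 * (Nat.find hex - 1) < n + (Nat.find hex - 1) % 2 :=
    not_le.1 (Nat.find_min hex (by omega))
  set f := ofSites n (sites n (Nat.find hex))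
  have hf : IsMaximalPacking (SimpleGraph.pathGraph n) f :=
    isMaximalPacking_ofSites hn (fun _ => lt_of_mem_sites hn hc')
      (fun _ ha _ hb => two_lt_dist_of_mem_sites hc hc' ha hb)
      (fun _ => exists_mem_sites_dist_le_two hc) (fun _ => exists_mem_sites_partner hc hc')
  have hmin (g) (hg : IsMaximalPacking (SimpleGraph.pathGraph n) g) : cost f ≤ cost g :=
    ((cost_ofSites_le _).trans card_sites_le).trans
      (Nat.find_min' hex (card_add_cost_mod_two_le hn hg))
  refine ⟨f, hf, (lowerBroadcastPacking_eq_of_forall_cost_le hf hmin).symm, fun v hv => ?_⟩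
  simp [f, ofSites, one_le_ofSites_iff.1 hv]
end
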